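/- Let f ∈ L¹(ℝ, ℂ), let g : ℝ → ℂ be a Schwartz function, and for 1 ≤ j ≤ k set X_{k,j}(t,η) = V_f^g·V_f^{t^k g} − V_f^{t^{j−1}g}·V_f^{t^{k−j+1}g} (STFTs at (t,η)). Fix k ≥ 3 and (t,η) such that V_f^g(t,η) ≠ 0, X_{2,2}(t,η) ≠ 0, and X_{4,3}(t,η)·X_{2,2}(t,η) − X_{3,2}(t,η)·X_{3,3}(t,η) ≠ 0. With x_{k,1}(η) = V_f^{t^{k−1}g}(t,η)/V_f^g(t,η) and x_{k,2} = ∂_η x_{k,1}/∂_η x_{2,1} = X_{k,2}/X_{2,2}, one has ∂_η x_{3,2}(η) ≠ 0 and x_{k,3}(t,η) := ∂_η x_{k,2}(η)/∂_η x_{3,2}(η) = [ X_{k+1,3}·X_{2,2} − X_{k,2}·X_{3,3} ] / [ X_{4,3}·X_{2,2} − X_{3,2}·X_{3,3} ], all quantities evaluated at (t,η). -/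

import Mathlib

open MeasureTheory Real

/-- The (modified) short-time Fourier transform of `f` with window `g`. -/
noncomputable def STFT (f g : ℝ → ℂ) (t η : ℝ) : ℂ :=
  ∫ τ : ℝ, f (t + τ) * (starRingEnd ℂ) (g τ) *
    Complex.exp (-2 * (π : ℂ) * Complex.I * (η : ℂ) * (τ : ℂ))


lemma stft_window_bdd (g : SchwartzMap ℝ ℂ) (m : ℕ) :
    ∃ C : ℝ, 0 < C ∧ ∀ τ : ℝ, ‖(τ : ℂ) ^ m * g τ‖ ≤ C := by
  obtain ⟨C, hC, h⟩ := g.decay m 0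
  refine ⟨C, hC, fun τ => ?_⟩
  have := h τ
  simpa [norm_iteratedFDeriv_zero, norm_mul, norm_pow, Complex.norm_real] using this

lemma stft_exp_norm (s τ : ℝ) :
    ‖Complex.exp (-2 * (π : ℂ) * Complex.I * (s : ℂ) * (τ : ℂ))‖ = 1 := by
  rw [Complex.norm_exp]
  have harg : (-2 * (π : ℂ) * Complex.I * (s : ℂ) * (τ : ℂ)).re = 0 := by
    simp [Complex.mul_re, Complex.mul_im]
  rw [harg, Real.exp_zero]

lemma stft_integrand_integrable (f : ℝ → ℂ) (hf : Integrable f) (g : SchwartzMap ℝ ℂ)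
    (m : ℕ) (t s : ℝ) :
    Integrable (fun τ : ℝ => f (t + τ) * (starRingEnd ℂ) ((τ : ℂ) ^ m * g τ) *
      Complex.exp (-2 * (π : ℂ) * Complex.I * (s : ℂ) * (τ : ℂ))) := by
  obtain ⟨C, hC, hbd⟩ := stft_window_bdd g m
  have hft : Integrable (fun τ : ℝ => f (t + τ)) := hf.comp_add_left t
  have hmeas : AEStronglyMeasurable (fun τ : ℝ => f (t + τ) * (starRingEnd ℂ) ((τ : ℂ) ^ m * g τ) *
      Complex.exp (-2 * (π : ℂ) * Complex.I * (s : ℂ) * (τ : ℂ))) volume := by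
    apply (hft.aestronglyMeasurable.mul ?_).mul ?_
    · exact (Complex.continuous_conj.comp ((Complex.continuous_ofReal.pow m).mul g.continuous)).aestronglyMeasurable
    · exact (Complex.continuous_exp.comp (by continuity)).aestronglyMeasurable
  refine (hft.norm.const_mul C).mono' hmeas ?_
  filter_upwards with τ
  rw [norm_mul, norm_mul, stft_exp_norm, mul_one, RingHomIsometric.norm_map]
  calc ‖f (t + τ)‖ * ‖(τ:ℂ)^m * g τ‖ ≤ ‖f (t + τ)‖ * C := by
        exact mul_le_mul_of_nonneg_left (hbd τ) (norm_nonneg _)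
    _ = C * ‖f (t + τ)‖ := mul_comm _ _

lemma stft_hasDerivAt (f : ℝ → ℂ) (hf : Integrable f) (g : SchwartzMap ℝ ℂ)
    (m : ℕ) (t η : ℝ) :
    HasDerivAt (fun s : ℝ => STFT f (fun τ : ℝ => (τ : ℂ) ^ m * g τ) t s)
      (-2 * (π : ℂ) * Complex.I *
        STFT f (fun τ : ℝ => (τ : ℂ) ^ (m + 1) * g τ) t η) η := by
  set F : ℝ → ℝ → ℂ := fun s τ => f (t + τ) * (starRingEnd ℂ) ((τ : ℂ) ^ m * g τ) *
      Complex.exp (-2 * (π : ℂ) * Complex.I * (s : ℂ) * (τ : ℂ)) with hF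
  set F' : ℝ → ℝ → ℂ := fun s τ => (-2 * (π : ℂ) * Complex.I * (τ : ℂ)) * F s τ with hF'
  obtain ⟨C, hC, hbd⟩ := stft_window_bdd g (m + 1)
  have key : Integrable (F' η) volume ∧
      HasDerivAt (fun s : ℝ => ∫ τ : ℝ, F s τ) (∫ τ : ℝ, F' η τ) η := by
    apply hasDerivAt_integral_of_dominated_loc_of_deriv_le (s := Metric.ball η 1) (Metric.ball_mem_nhds η one_pos)
      (bound := fun τ : ℝ => 2 * π * C * ‖f (t + τ)‖)
    · filter_upwards with s
      exact (stft_integrand_integrable f hf g m t s).aestronglyMeasurable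
    · exact stft_integrand_integrable f hf g m t η
    · apply Continuous.aestronglyMeasurable ?_ |>.mul
        (stft_integrand_integrable f hf g m t η).aestronglyMeasurable
      continuity
    · filter_upwards with τ s _
      have h1 : ‖(starRingEnd ℂ) ((τ:ℂ)^m * g τ)‖ = ‖(τ:ℂ)^m * g τ‖ :=
        RingHomIsometric.norm_map
      have h2 : ‖(-2 : ℂ) * (π:ℂ) * Complex.I * (τ:ℂ)‖ = 2 * π * |τ| := by
        rw [norm_mul, norm_mul, norm_mul]
        simp [Complex.norm_real, abs_of_pos Real.pi_pos]
      have hFs : ‖F s τ‖ = ‖f (t+τ)‖ * ‖(τ:ℂ)^m * g τ‖ := by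
        rw [hF]
        show ‖f (t + τ) * (starRingEnd ℂ) ((τ : ℂ) ^ m * g τ) *
          Complex.exp (-2 * (π : ℂ) * Complex.I * (s : ℂ) * (τ : ℂ))‖ = _
        rw [norm_mul, norm_mul, stft_exp_norm, mul_one, h1]
      have hgoal : ‖F' s τ‖ = 2 * π * |τ| * (‖f (t+τ)‖ * ‖(τ:ℂ)^m * g τ‖) := by
        rw [hF']
        show ‖(-2 * (π:ℂ) * Complex.I * (τ:ℂ)) * F s τ‖ = _
        rw [norm_mul, h2, hFs]
      rw [hgoal]
      have hb : |τ| * ‖(τ:ℂ)^m * g τ‖ = ‖(τ:ℂ)^(m+1) * g τ‖ := by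
        rw [norm_mul, norm_mul, norm_pow, norm_pow, Complex.norm_real, pow_succ,
          Real.norm_eq_abs]
        ring
      have : (2 * π * |τ|) * (‖f (t + τ)‖ * ‖(τ:ℂ)^m * g τ‖)
          = (2 * π) * ‖f (t+τ)‖ * (|τ| * ‖(τ:ℂ)^m * g τ‖) := by ring
      rw [this, hb]
      calc (2 * π) * ‖f (t+τ)‖ * ‖(τ:ℂ)^(m+1) * g τ‖ ≤ (2*π) * ‖f (t+τ)‖ * C :=
            mul_le_mul_of_nonneg_left (hbd τ) (by positivity)
        _ = 2 * π * C * ‖f (t + τ)‖ := by ring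
    · exact (hf.comp_add_left t).norm.const_mul _
    · filter_upwards with τ s _
      have h0 : HasDerivAt (fun s : ℝ => (s : ℂ)) 1 s := Complex.ofRealCLM.hasDerivAt
      have harg : HasDerivAt (fun s : ℝ => -2 * (π : ℂ) * Complex.I * (s : ℂ) * (τ : ℂ))
          (-2 * (π : ℂ) * Complex.I * (τ : ℂ)) s := by
        have h1 := (h0.const_mul (-2 * (π : ℂ) * Complex.I)).mul_const (τ : ℂ)
        simpa using h1
      have hc := harg.cexp
      have hd := hc.const_mul (f (t + τ) * (starRingEnd ℂ) ((τ : ℂ) ^ m * g τ))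
      have heq : F' s τ = f (t + τ) * (starRingEnd ℂ) ((τ : ℂ) ^ m * g τ) *
          (Complex.exp (-2 * (π : ℂ) * Complex.I * (s : ℂ) * (τ : ℂ)) *
            (-2 * (π : ℂ) * Complex.I * (τ : ℂ))) := by
        show -2 * (π:ℂ) * Complex.I * τ *
          (f (t + τ) * (starRingEnd ℂ) ((τ : ℂ) ^ m * g τ) *
            Complex.exp (-2 * (π : ℂ) * Complex.I * (s : ℂ) * (τ : ℂ))) = _
        ring
      show HasDerivAt (F · τ) (F' s τ) s
      rw [heq]
      exact hd
  have h2 : (∫ τ : ℝ, F' η τ) = -2 * (π : ℂ) * Complex.I *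
      STFT f (fun τ : ℝ => (τ : ℂ) ^ (m + 1) * g τ) t η := by
    rw [STFT, ← integral_const_mul]
    congr 1 with τ
    have e1 : (starRingEnd ℂ) ((τ:ℂ)^(m+1) * g τ) = (τ:ℂ)^(m+1) * (starRingEnd ℂ) (g τ) := by
      rw [map_mul, map_pow, Complex.conj_ofReal]
    have e2 : (starRingEnd ℂ) ((τ:ℂ)^m * g τ) = (τ:ℂ)^m * (starRingEnd ℂ) (g τ) := by
      rw [map_mul, map_pow, Complex.conj_ofReal]
    rw [hF', hF]
    show -2 * (π:ℂ) * Complex.I * τ *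
        (f (t + τ) * (starRingEnd ℂ) ((τ : ℂ) ^ m * g τ) *
          Complex.exp (-2 * (π : ℂ) * Complex.I * (η : ℂ) * (τ : ℂ))) = _
    rw [e1, e2, pow_succ]
    ring
  rw [← h2]
  exact key.2

/-- with `X_{k,j} = V_f^g·V_f^{t^k g} − V_f^{t^{j−1}g}·V_f^{t^{k−j+1}g}`,
`x_{k,1}(η) = V_f^{t^{k−1}g}(t,η)/V_f^g(t,η)` and `x_{k,2} = ∂_η x_{k,1}/∂_η x_{2,1}`,
one has `∂_η x_{3,2}(η) ≠ 0` and `x_{k,3} = ∂_η x_{k,2}/∂_η x_{3,2}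
= [X_{k+1,3}·X_{2,2} − X_{k,2}·X_{3,3}] / [X_{4,3}·X_{2,2} − X_{3,2}·X_{3,3}]`. -/
theorem x_k_3_closed_form (f : ℝ → ℂ) (hf : Integrable f) (g : SchwartzMap ℝ ℂ)
    (X : ℕ → ℕ → ℝ → ℝ → ℂ)
    (hX : ∀ (k j : ℕ) (t η : ℝ),
      X k j t η = STFT f (⇑g) t η * STFT f (fun τ : ℝ => (τ : ℂ) ^ k * g τ) t η
        - STFT f (fun τ : ℝ => (τ : ℂ) ^ (j - 1) * g τ) t η *
            STFT f (fun τ : ℝ => (τ : ℂ) ^ (k - j + 1) * g τ) t η)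
    (k : ℕ) (hk : 3 ≤ k) (t η : ℝ)
    (hV : STFT f (⇑g) t η ≠ 0)
    (hX22 : X 2 2 t η ≠ 0)
    (hD : X 4 3 t η * X 2 2 t η - X 3 2 t η * X 3 3 t η ≠ 0)
    (x1 : ℕ → ℝ → ℂ)
    (hx1 : ∀ m : ℕ, x1 m = fun η' : ℝ =>
      STFT f (fun τ : ℝ => (τ : ℂ) ^ (m - 1) * g τ) t η' / STFT f (⇑g) t η')
    (x2 : ℕ → ℝ → ℂ)
    (hx2 : ∀ m : ℕ, x2 m = fun η' : ℝ => deriv (x1 m) η' / deriv (x1 2) η') :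
    deriv (x2 3) η ≠ 0 ∧
    deriv (x2 k) η / deriv (x2 3) η
      = (X (k + 1) 3 t η * X 2 2 t η - X k 2 t η * X 3 3 t η) /
        (X 4 3 t η * X 2 2 t η - X 3 2 t η * X 3 3 t η) := by
  set c : ℂ := -2 * (π : ℂ) * Complex.I with hc_def
  have hc : c ≠ 0 := by
    simp [hc_def, Complex.I_ne_zero, Real.pi_ne_zero, Complex.ofReal_ne_zero]
  set V : ℕ → ℝ → ℂ := fun m s => STFT f (fun τ : ℝ => (τ : ℂ) ^ m * g τ) t s with hV_def
  have hVd : ∀ (m : ℕ) (s : ℝ), HasDerivAt (V m) (c * V (m + 1) s) s := fun m s =>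
    stft_hasDerivAt f hf g m t s
  have hV0 : ∀ s, STFT f (⇑g) t s = V 0 s := by
    intro s
    show _ = STFT f (fun τ : ℝ => (τ : ℂ) ^ 0 * g τ) t s
    simp only [pow_zero, one_mul]
  have hV0η : V 0 η ≠ 0 := by rw [← hV0]; exact hV
  -- P n = Xf_{n+1}, Q n = Yf_{n+1}
  set P : ℕ → ℝ → ℂ := fun n s => V 0 s * V (n + 1) s - V 1 s * V n s with hP_def
  set Q : ℕ → ℝ → ℂ := fun n s => V 0 s * V (n + 2) s - V 2 s * V n s with hQ_def
  have hPd : ∀ (n : ℕ) (s : ℝ), HasDerivAt (P n) (c * Q n s) s := by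
    intro n s
    have h : HasDerivAt (P n) _ s := ((hVd 0 s).mul (hVd (n + 1) s)).sub ((hVd 1 s).mul (hVd n s))
    convert h using 1
    show c * (V 0 s * V (n+2) s - V 2 s * V n s) = _
    ring_nf
  -- derivative of x1 (n+1) where V 0 ≠ 0
  have hd1 : ∀ (n : ℕ) (s : ℝ), V 0 s ≠ 0 →
      HasDerivAt (x1 (n + 1)) (c * P n s / (V 0 s) ^ 2) s := by
    intro n s hs
    have hx1e : x1 (n + 1) = fun η' => V n η' / V 0 η' := by
      rw [hx1]
      funext η'
      rw [hV0]
      rfl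
    rw [hx1e]
    have h : HasDerivAt (fun η' => V n η' / V 0 η') _ s := (hVd n s).div (hVd 0 s) hs
    convert h using 1
    rw [hP_def]
    field_simp
  -- eventually V 0 ≠ 0
  have hev : ∀ᶠ s in nhds η, V 0 s ≠ 0 :=
    (hVd 0 η).continuousAt.eventually_ne hV0η
  -- x2 (n+1) agrees with P n / P 1 near η
  have hx2ev : ∀ n : ℕ, x2 (n + 1) =ᶠ[nhds η] fun s => P n s / P 1 s := by
    intro n
    filter_upwards [hev] with s hs
    rw [hx2]
    have e1 : deriv (x1 (n + 1)) s = c * P n s / (V 0 s) ^ 2 := (hd1 n s hs).deriv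
    have e2 : deriv (x1 2) s = c * P 1 s / (V 0 s) ^ 2 := (hd1 1 s hs).deriv
    show deriv (x1 (n+1)) s / deriv (x1 2) s = _
    rw [e1, e2]
    rw [mul_div_right_comm c (P n s), mul_div_right_comm c (P 1 s)]
    exact mul_div_mul_left _ _ (div_ne_zero hc (pow_ne_zero 2 hs))
  -- derivative of x2 (n+1) at η
  have hP1 : P 1 η = X 2 2 t η := by
    rw [hX, hV0]
  have hP1ne : P 1 η ≠ 0 := by rw [hP1]; exact hX22
  have hd2 : ∀ n : ℕ, deriv (x2 (n + 1)) η
      = c * (Q n η * P 1 η - P n η * Q 1 η) / (P 1 η) ^ 2 := by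
    intro n
    rw [(hx2ev n).deriv_eq]
    have h : HasDerivAt (fun s => P n s / P 1 s) _ η := (hPd n η).div (hPd 1 η) hP1ne
    rw [h.deriv]
    congr 1
    ring
  -- translate X values
  have e33 : X 3 3 t η = Q 1 η := by
    rw [hX, hV0]
  have e43 : X 4 3 t η = Q 2 η := by
    rw [hX, hV0]
  have e32 : X 3 2 t η = P 2 η := by
    rw [hX, hV0]
  have ek2 : X k 2 t η = P (k - 1) η := by
    rw [hX, hV0]
    show _ = V 0 η * V (k - 1 + 1) η - V 1 η * V (k - 1) η
    rw [show k - 1 + 1 = k from by omega, show k - 2 + 1 = k - 1 from by omega]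
  have ek3 : X (k + 1) 3 t η = Q (k - 1) η := by
    rw [hX, hV0]
    show _ = V 0 η * V (k - 1 + 2) η - V 2 η * V (k - 1) η
    rw [show k - 1 + 2 = k + 1 from by omega, show k + 1 - 3 + 1 = k - 1 from by omega]
  have hDQ : Q 2 η * P 1 η - P 2 η * Q 1 η ≠ 0 := by
    rw [← e43, ← e32, ← e33, hP1]; exact hD
  have hder3 : deriv (x2 3) η = c * (Q 2 η * P 1 η - P 2 η * Q 1 η) / (P 1 η) ^ 2 := by
    have := hd2 2
    rwa [show (2:ℕ) + 1 = 3 from rfl] at this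
  have hderk : deriv (x2 k) η
      = c * (Q (k-1) η * P 1 η - P (k-1) η * Q 1 η) / (P 1 η) ^ 2 := by
    have := hd2 (k - 1)
    rwa [show k - 1 + 1 = k from by omega] at this
  constructor
  · rw [hder3]
    exact div_ne_zero (mul_ne_zero hc hDQ) (pow_ne_zero 2 hP1ne)
  · rw [hder3, hderk, ek3, ek2, e43, e32, e33, hP1]
    rw [mul_div_right_comm c, mul_div_right_comm c]
    exact mul_div_mul_left _ _ (div_ne_zero hc (pow_ne_zero 2 hX22))
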